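/- Let G = ((V,E),(V_1,V_2), v_in, AP, L) be a labeled game graph that is controllably recurrent. Then there exists an end component U of G with v_in ∈ U and a player-1 strategy π_1 such that for every player-2 strategy π_2, |L(ω(v_in,π_1,π_2))| ≥ |⋃_{u∈U} L(u)|. -/

import Mathlib

/-!
Player 1 plays round robin: at its `n`-th visit to a vertex it moves to the `n`-th successor,
cyclically. Against any player-2 strategy, the set of vertices visited infinitely often is then
strongly connected and closed under player-1 moves, i.e. an end component. It contains `v_in`:
otherwise player 2 could keep the play inside it forever, contradicting controllable recurrence.
An end component `U` through `v_in` with the fewest labels therefore has no more labels than the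
vertices seen infinitely often, which in turn have no more than the whole play.
-/

/-- `π` is a valid strategy for the player owning the vertices satisfying `owns`:
for every history `w` and current vertex `v` owned by the player, the chosen
successor `π w v` is along an edge of the game graph. -/
def IsStrat {V : Type*} (E : V → V → Prop) (owns : V → Prop)
    (π : List V → V → V) : Prop :=
  ∀ (w : List V) (v : V), owns v → E v (π w v)

/-- Auxiliary function computing, after `i` steps of the play from `v`, the pair
(current vertex, history of previously visited vertices).  Here `P1 v = true` means
`v` is a player-1 vertex, and `P1 v = false` that it is a player-2 vertex. -/
def playSeq {V : Type*} (P1 : V → Bool) (π1 π2 : List V → V → V) (v : V) :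
    ℕ → V × List V
  | 0 => (v, [])
  | i + 1 =>
    let p := playSeq P1 π1 π2 v i
    (if P1 p.1 then π1 p.2 p.1 else π2 p.2 p.1, p.2 ++ [p.1])

/-- The unique play `ω(v, π1, π2)`: the `i`-th vertex of the infinite play starting
at `v` in which player 1 (resp. player 2) resolves choices at vertices `u` with
`P1 u = true` (resp. `P1 u = false`) using strategy `π1` (resp. `π2`). -/
def play {V : Type*} (P1 : V → Bool) (π1 π2 : List V → V → V) (v : V) (i : ℕ) : V :=
  (playSeq P1 π1 π2 v i).1

/-- An end component of a labeled game graph: a nonempty set `U` of vertices that is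
(i) strongly connected — between any two vertices of `U` there is a path of positive
length using only vertices of `U` — and (ii) player-1 closed — every edge leaving a
player-1 vertex of `U` stays in `U`. -/
def IsEndComponent {V : Type*} (E : V → V → Prop) (P1 : V → Bool) (U : Set V) :
    Prop :=
  U.Nonempty ∧
    (∀ u ∈ U, ∀ u' ∈ U,
      Relation.TransGen (fun a b => a ∈ U ∧ b ∈ U ∧ E a b) u u') ∧
    (∀ u ∈ U, P1 u = true → ∀ u', E u u' → u' ∈ U)

open Relation Filter

section Play

variable {V : Type*} {P1 : V → Bool} {π1 π2 : List V → V → V} {v : V}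

lemma playSeq_snd (i : ℕ) :
    (playSeq P1 π1 π2 v i).2 = (List.range i).map (play P1 π1 π2 v) := by
  induction i with
  | zero => rfl
  | succ i ih => simp [playSeq, ih, List.range_succ, play]

lemma play_succ (i : ℕ) :
    play P1 π1 π2 v (i + 1) =
      if P1 (play P1 π1 π2 v i) then
        π1 ((List.range i).map (play P1 π1 π2 v)) (play P1 π1 π2 v i)
      else π2 ((List.range i).map (play P1 π1 π2 v)) (play P1 π1 π2 v i) := by
  simp only [play, playSeq, ← playSeq_snd]

variable {E : V → V → Prop}

lemma play_edge (h1 : IsStrat E (fun u => P1 u = true) π1)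
    (h2 : IsStrat E (fun u => P1 u = false) π2) (i : ℕ) :
    E (play P1 π1 π2 v i) (play P1 π1 π2 v (i + 1)) := by
  rw [play_succ]
  cases hp : P1 (play P1 π1 π2 v i)
  · exact h2 _ _ hp
  · exact h1 _ _ hp

lemma reflTransGen_play (h1 : IsStrat E (fun u => P1 u = true) π1)
    (h2 : IsStrat E (fun u => P1 u = false) π2) (i : ℕ) :
    ReflTransGen E v (play P1 π1 π2 v i) := by
  induction i with
  | zero => exact .refl
  | succ i ih => exact ih.tail (play_edge h1 h2 i)

/-- Player 2 keeps the play inside `U` by always moving to a successor in `U`. -/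
lemma mem_of_forces_visit (hE : ∀ v, ∃ u, E v u) {U : Set V}
    (hU1 : ∀ u ∈ U, P1 u = true → ∀ u', E u u' → u' ∈ U)
    (hU2 : ∀ u ∈ U, P1 u = false → ∃ u' ∈ U, E u u') {t : V} (hv : v ∈ U)
    (hforce : ∃ π1, IsStrat E (fun u => P1 u = true) π1 ∧
      ∀ π2, IsStrat E (fun u => P1 u = false) π2 → ∃ i, play P1 π1 π2 v i = t) :
    t ∈ U := by
  classical
  let stay : List V → V → V := fun _ u =>
    if h : ∃ u' ∈ U, E u u' then h.choose else (hE u).choose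
  have hstay : IsStrat E (fun u => P1 u = false) stay := by
    intro _ u _
    simp only [stay]
    split_ifs with h
    · exact h.choose_spec.2
    · exact (hE u).choose_spec
  obtain ⟨π1, hπ1, hvisit⟩ := hforce
  obtain ⟨i, rfl⟩ := hvisit stay hstay
  clear hvisit
  induction i with
  | zero => exact hv
  | succ i ih =>
    rw [play_succ]
    cases hp : P1 (play P1 π1 stay v i)
    · have h := hU2 _ ih hp
      simpa only [Bool.false_eq_true, if_false, stay, dif_pos h] using h.choose_spec.1
    · exact hU1 _ ih hp _ (hπ1 _ _ hp)

end Play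

section InfinitelyOften

variable {V : Type*} {ρ : ℕ → V}

def infinitelyOften (ρ : ℕ → V) : Set V := {u | {i | ρ i = u}.Infinite}

lemma infinitelyOften_nonempty [Finite V] (ρ : ℕ → V) : (infinitelyOften ρ).Nonempty := by
  obtain ⟨u, hu⟩ := Finite.exists_infinite_fiber ρ
  exact ⟨u, Set.infinite_coe_iff.mp hu⟩

lemma eventually_mem_infinitelyOften [Finite V] (ρ : ℕ → V) :
    ∀ᶠ i in atTop, ρ i ∈ infinitelyOften ρ := by
  rw [← Nat.cofinite_eq_atTop, eventually_cofinite]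
  exact (Set.toFinite (infinitelyOften ρ)ᶜ).preimage' fun _ hu => Set.not_infinite.mp hu

variable {E : V → V → Prop}

lemma exists_mem_infinitelyOften_edge [Finite V] (hρ : ∀ i, E (ρ i) (ρ (i + 1)))
    {u : V} (hu : u ∈ infinitelyOften ρ) : ∃ u' ∈ infinitelyOften ρ, E u u' := by
  obtain ⟨N, hN⟩ := eventually_atTop.mp (eventually_mem_infinitelyOften ρ)
  obtain ⟨i, rfl, hi⟩ := hu.exists_gt N
  exact ⟨ρ (i + 1), hN _ (by omega), hρ i⟩

lemma transGen_infinitelyOften [Finite V] (hρ : ∀ i, E (ρ i) (ρ (i + 1)))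
    {u u' : V} (hu : u ∈ infinitelyOften ρ) (hu' : u' ∈ infinitelyOften ρ) :
    TransGen (fun a b => a ∈ infinitelyOften ρ ∧ b ∈ infinitelyOften ρ ∧ E a b) u u' := by
  obtain ⟨N, hN⟩ := eventually_atTop.mp (eventually_mem_infinitelyOften ρ)
  obtain ⟨i, rfl, hi⟩ := hu.exists_gt N
  obtain ⟨j, rfl, hj⟩ := hu'.exists_gt i
  have := transGen_of_succ_of_lt (fun a b => ρ a ∈ infinitelyOften ρ ∧
    ρ b ∈ infinitelyOften ρ ∧ E (ρ a) (ρ b))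
    (fun k hk => ⟨hN k (by grind), hN (k + 1) (by grind), hρ k⟩) hj
  exact this.lift ρ fun _ _ => id

lemma biUnion_infinitelyOften_subset {β : Type*} (f : V → Set β) :
    ⋃ u ∈ infinitelyOften ρ, f u ⊆ ⋃ i, f (ρ i) := by
  simp only [Set.iUnion_subset_iff]
  intro u hu
  obtain ⟨i, rfl, -⟩ := hu.exists_gt 0
  exact Set.subset_iUnion (fun i => f (ρ i)) i

end InfinitelyOften

lemma count_map_range {V : Type*} [DecidableEq V] (ρ : ℕ → V) (u : V) (i : ℕ) :
    ((List.range i).map ρ).count u = Nat.count (ρ · = u) i := by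
  induction i with
  | zero => rfl
  | succ i ih =>
    rw [List.range_succ, List.map_append, List.count_append, ih, Nat.count_succ]
    simp [List.count_singleton]

section RoundRobin

open Classical

variable {V : Type*} [Fintype V] {E : V → V → Prop}

noncomputable def succList (E : V → V → Prop) (v : V) : List V :=
  (Finset.univ.filter (E v)).toList

lemma mem_succList {v u : V} : u ∈ succList E v ↔ E v u := by
  simp [succList]

lemma succList_length_pos (hE : ∀ v, ∃ u, E v u) (v : V) : 0 < (succList E v).length := by
  obtain ⟨u, hu⟩ := hE v
  exact List.length_pos_of_mem (mem_succList.mpr hu)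

/-- At its `n`-th visit to `v` (counted from `0`), the strategy moves to the `n`-th successor
of `v` in a fixed enumeration, cyclically. -/
noncomputable def roundRobin (E : V → V → Prop) (hE : ∀ v, ∃ u, E v u) : List V → V → V :=
  fun w v => (succList E v)[w.count v % (succList E v).length]'
    (Nat.mod_lt _ (succList_length_pos hE v))

lemma roundRobin_isStrat (hE : ∀ v, ∃ u, E v u) (owns : V → Prop) :
    IsStrat E owns (roundRobin E hE) :=
  fun _ _ _ => mem_succList.mp (List.getElem_mem _)

/-- The `(c * deg u + t)`-th visit to `u` is followed by the `t`-th successor of `u`. -/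
lemma mem_infinitelyOften_of_roundRobin (hE : ∀ v, ∃ u, E v u) {ρ : ℕ → V} {u u' : V}
    (hρ : ∀ i, ρ i = u → ρ (i + 1) = roundRobin E hE ((List.range i).map ρ) u)
    (hu : u ∈ infinitelyOften ρ) (he : E u u') : u' ∈ infinitelyOften ρ := by
  obtain ⟨t, ht, hget⟩ := List.getElem_of_mem (mem_succList.mpr he)
  have hinf : (Set.ofPred (ρ · = u)).Infinite := hu
  let visit : ℕ → ℕ := fun c => Nat.nth (ρ · = u) (c * (succList E u).length + t)
  have hvisit : ∀ c, ρ (visit c + 1) = u' := by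
    intro c
    have hidx : Nat.count (ρ · = u) (visit c) % (succList E u).length = t := by
      rw [Nat.count_nth_of_infinite hinf, Nat.mul_add_mod_self_right, Nat.mod_eq_of_lt ht]
    rw [hρ _ (Nat.nth_mem_of_infinite hinf _)]
    simp only [roundRobin, count_map_range]
    convert hget using 2
  refine Set.infinite_of_injective_forall_mem (f := fun c => visit c + 1) ?_ hvisit
  intro a b hab
  have := (Nat.nth_strictMono hinf).injective (Nat.succ_injective hab)
  simpa [(succList_length_pos hE u).ne'] using this

lemma mem_infinitelyOften_play_roundRobin {P1 : V → Bool} (hE : ∀ v, ∃ u, E v u)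
    {π2 : List V → V → V} {v u u' : V}
    (hu : u ∈ infinitelyOften (play P1 (roundRobin E hE) π2 v)) (hp : P1 u = true)
    (he : E u u') : u' ∈ infinitelyOften (play P1 (roundRobin E hE) π2 v) :=
  mem_infinitelyOften_of_roundRobin hE (fun i hi => by rw [play_succ, hi, hp, if_pos rfl]) hu he

end RoundRobin

section EndComponent

variable {V : Type*} [Fintype V] {E : V → V → Prop} {P1 : V → Bool} {π2 : List V → V → V}

lemma isEndComponent_infinitelyOften_roundRobin (hE : ∀ v, ∃ u, E v u)
    (hπ2 : IsStrat E (fun u => P1 u = false) π2) (v : V) :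
    IsEndComponent E P1 (infinitelyOften (play P1 (roundRobin E hE) π2 v)) :=
  have hρ := play_edge (v := v) (roundRobin_isStrat hE _) hπ2
  ⟨infinitelyOften_nonempty _, fun _ hu _ hu' => transGen_infinitelyOften hρ hu hu',
    fun _ hu hp _ he => mem_infinitelyOften_play_roundRobin hE hu hp he⟩

lemma mem_infinitelyOften_roundRobin_of_recurrent (hE : ∀ v, ∃ u, E v u)
    (hπ2 : IsStrat E (fun u => P1 u = false) π2) {vin : V}
    (hcr : ∀ v, ReflTransGen E vin v →
      ∃ π1, IsStrat E (fun u => P1 u = true) π1 ∧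
        ∀ π2, IsStrat E (fun u => P1 u = false) π2 →
          ∃ i : ℕ, play P1 π1 π2 v i = vin) :
    vin ∈ infinitelyOften (play P1 (roundRobin E hE) π2 vin) := by
  have hρ := play_edge (v := vin) (roundRobin_isStrat hE _) hπ2
  obtain ⟨u, hu⟩ := infinitelyOften_nonempty (play P1 (roundRobin E hE) π2 vin)
  obtain ⟨i, rfl, -⟩ := hu.exists_gt 0
  exact mem_of_forces_visit hE (fun _ hu hp _ he => mem_infinitelyOften_play_roundRobin hE hu hp he)
    (fun _ hu _ => exists_mem_infinitelyOften_edge hρ hu) hu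
    (hcr _ (reflTransGen_play (roundRobin_isStrat hE _) hπ2 i))

end EndComponent

/-- Let `G = ((V,E),(V_1,V_2), v_in, AP, L)` be a labeled game graph that is
controllably recurrent: from every vertex `v` reachable from `v_in` in the underlying
graph, player 1 has a strategy ensuring, against every player-2 strategy, that the
play from `v` visits `v_in`.  Then there exists an end component `U` of `G` with
`v_in ∈ U` and a player-1 strategy `π_1` such that for every player-2 strategy `π_2`,
`|L(ω(v_in,π_1,π_2))| ≥ |⋃_{u∈U} L(u)|`. -/
theorem controllably_recurrent_game_witness_end_component
    {V AP : Type*} [Fintype V] [Fintype AP]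
    (E : V → V → Prop) (hE : ∀ v, ∃ u, E v u)
    (P1 : V → Bool) (vin : V) (L : V → Set AP)
    (hcr : ∀ v, Relation.ReflTransGen E vin v →
      ∃ π1, IsStrat E (fun u => P1 u = true) π1 ∧
        ∀ π2, IsStrat E (fun u => P1 u = false) π2 →
          ∃ i : ℕ, play P1 π1 π2 v i = vin) :
    ∃ U : Set V, IsEndComponent E P1 U ∧ vin ∈ U ∧
      ∃ π1, IsStrat E (fun u => P1 u = true) π1 ∧
        ∀ π2, IsStrat E (fun u => P1 u = false) π2 →
          (⋃ u ∈ U, L u).ncard ≤ (⋃ i : ℕ, L (play P1 π1 π2 vin i)).ncard := by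
  have hEC : ∀ π2, IsStrat E (fun u => P1 u = false) π2 →
      IsEndComponent E P1 (infinitelyOften (play P1 (roundRobin E hE) π2 vin)) ∧
        vin ∈ infinitelyOften (play P1 (roundRobin E hE) π2 vin) := fun π2 hπ2 =>
    ⟨isEndComponent_infinitelyOften_roundRobin hE hπ2 vin,
      mem_infinitelyOften_roundRobin_of_recurrent hE hπ2 hcr⟩
  obtain ⟨U, ⟨hU, hvin⟩, hmin⟩ := Set.exists_min_image
    {U | IsEndComponent E P1 U ∧ vin ∈ U} (fun U => (⋃ u ∈ U, L u).ncard) (Set.toFinite _)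
    ⟨_, hEC _ (roundRobin_isStrat hE _)⟩
  refine ⟨U, hU, hvin, roundRobin E hE, roundRobin_isStrat hE _, fun π2 hπ2 => ?_⟩
  calc (⋃ u ∈ U, L u).ncard
      ≤ (⋃ u ∈ infinitelyOften (play P1 (roundRobin E hE) π2 vin), L u).ncard :=
        hmin _ (hEC π2 hπ2)
    _ ≤ _ := Set.ncard_le_ncard (biUnion_infinitelyOften_subset L) (Set.toFinite _)
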